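/- Let K be a finite field or an algebraically closed field and let X be a complete simplicial toric variety over K with split torus T_X. A subset Y ⊆ T_X is a finite submonoid of T_X if and only if Y = Y_{Q,H} for some finite submonoid H of K* and integer matrix Q, where Y_{Q,H} = {[t₁^{q₁₁}⋯t_s^{q_{s1}} : ⋯ : t₁^{q_{1r}}⋯t_s^{q_{sr}}] : t₁,…,t_s ∈ H}. -/

import Mathlib

/-!
A finite submonoid of a group consists of elements of finite order, so the forward direction
reduces to lifting torsion points of `T_X = (K*)^r / G` to points of `(K*)^r` whose coordinates
are roots of unity. Over a finite field every point will do. Over an algebraically closed field,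
if `y = [P₀]` and `y^d = 1`, then `m ↦ x^m(P₀)` maps `Ker β` into the roots of unity; these form
a divisible, hence injective, `ℤ`-module, so this character extends to `ℤ^r`, and the extension
is `x^m(P)` for a point `P` with root-of-unity coordinates and `[P] = y`.
Finitely many roots of unity lie in one cyclic group `⟨ζ⟩`. Taking one parameter `t_y ∈ ⟨ζ⟩` for
each `y ∈ Y` and the exponents of the chosen representative of `y` as the row `Q_y` gives
`Y = Y_{Q,⟨ζ⟩}`. Conversely, `Y_{Q,H}` is the image of the finite monoid `H^s` under a monoid
homomorphism.
-/

open MvPolynomial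

/-- The exponent vector of the positive part `m⁺` of an integer vector. -/
noncomputable def expOf {r : ℕ} (m : Fin r → ℤ) : Fin r →₀ ℕ :=
  Finsupp.equivFunOnFinite.symm fun i => (m i).toNat

/-- The binomial `F_m = x^{m⁺} - x^{m⁻}`. -/
noncomputable def latticeBinomial (K : Type*) [Field K] {r : ℕ} (m : Fin r → ℤ) :
    MvPolynomial (Fin r) K :=
  monomial (expOf m) 1 - monomial (expOf (-m)) 1

/-- The lattice ideal `I_L` of a lattice `L ⊆ ℤ^r`. -/
noncomputable def latticeIdeal (K : Type*) [Field K] {r : ℕ} (L : AddSubgroup (Fin r → ℤ)) :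
    Ideal (MvPolynomial (Fin r) K) :=
  Ideal.span {f | ∃ m ∈ L, f = latticeBinomial K m}

/-- Degree of a monomial exponent under the grading `β`. -/
def degOf {A : Type*} [AddCommGroup A] {r : ℕ} (β : (Fin r → ℤ) →+ A) (d : Fin r →₀ ℕ) : A :=
  β fun i => (d i : ℤ)

/-- `f` is homogeneous of degree `α` with respect to `β`. -/
def IsHomogOf {A : Type*} [AddCommGroup A] {K : Type*} [Field K] {r : ℕ}
    (β : (Fin r → ℤ) →+ A) (α : A) (f : MvPolynomial (Fin r) K) : Prop :=
  ∀ d ∈ f.support, degOf β d = α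

/-- `f` is homogeneous with respect to `β`. -/
def IsHomog {A : Type*} [AddCommGroup A] {K : Type*} [Field K] {r : ℕ}
    (β : (Fin r → ℤ) →+ A) (f : MvPolynomial (Fin r) K) : Prop :=
  ∃ α, IsHomogOf β α f

/-- An ideal is homogeneous if it is generated by homogeneous polynomials. -/
def IsHomogIdeal {A : Type*} [AddCommGroup A] {K : Type*} [Field K] {r : ℕ}
    (β : (Fin r → ℤ) →+ A) (I : Ideal (MvPolynomial (Fin r) K)) : Prop :=
  ∃ S : Set (MvPolynomial (Fin r) K), (∀ f ∈ S, IsHomog β f) ∧ I = Ideal.span S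

/-- `x^m(P) = ∏ᵢ Pᵢ^{mᵢ}` as a unit. -/
def charEval {K : Type*} [Field K] {r : ℕ} (P : Fin r → Kˣ) (m : Fin r → ℤ) : Kˣ :=
  ∏ i, (P i) ^ (m i)

/-- The group `G = Ker π`, consisting of the points where all characters coming
from `Ker β` take the value `1`. -/
def torusG {K : Type*} [Field K] {A : Type*} [AddCommGroup A] {r : ℕ}
    (β : (Fin r → ℤ) →+ A) : Subgroup (Fin r → Kˣ) where
  carrier := {g | ∀ m ∈ β.ker, charEval g m = 1}
  one_mem' := by intro m hm; simp [charEval]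
  mul_mem' := by
    intro a b ha hb m hm
    have : charEval (a * b) m = charEval a m * charEval b m := by
      simp [charEval, mul_zpow, Finset.prod_mul_distrib]
    rw [this, ha m hm, hb m hm, one_mul]
  inv_mem' := by
    intro a ha m hm
    have : charEval a⁻¹ m = (charEval a m)⁻¹ := by
      simp [charEval, inv_zpow]
    rw [this, ha m hm, inv_one]

/-- The vanishing ideal of a set of torus points, generated by the homogeneous
polynomials vanishing on it. -/
noncomputable def vanishingIdeal {K : Type*} [Field K] {A : Type*} [AddCommGroup A] {r : ℕ}
    (β : (Fin r → ℤ) →+ A) (Y : Set ((Fin r → Kˣ) ⧸ torusG (K := K) β)) :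
    Ideal (MvPolynomial (Fin r) K) :=
  Ideal.span {f | IsHomog β f ∧
    ∀ P : Fin r → Kˣ, (QuotientGroup.mk P ∈ Y) → eval (fun i => (P i : K)) f = 0}

/-- Height of an ideal: infimum of heights of primes containing it. -/
noncomputable def idealHeight {R : Type*} [CommRing R] (I : Ideal R) : ℕ∞ :=
  ⨅ (p : PrimeSpectrum R) (_ : I ≤ p.asIdeal), Order.height p

/-- A homogeneous ideal is a complete intersection if it is generated by a regular
sequence of homogeneous polynomials whose length is the height of the ideal. -/
def IsCompleteIntersection {K : Type*} [Field K] {A : Type*} [AddCommGroup A] {r : ℕ}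
    (β : (Fin r → ℤ) →+ A) (I : Ideal (MvPolynomial (Fin r) K)) : Prop :=
  ∃ (k : ℕ) (f : Fin k → MvPolynomial (Fin r) K),
    (∀ i, IsHomog β (f i)) ∧
    RingTheory.Sequence.IsRegular (MvPolynomial (Fin r) K) (List.ofFn f) ∧
    I = Ideal.span (Set.range f) ∧ (k : ℕ∞) = idealHeight I

section CharEval

variable {K : Type*} [Field K] {r : ℕ}

@[simp]
lemma charEval_zero (P : Fin r → Kˣ) : charEval P 0 = 1 := by
  simp [charEval]

lemma charEval_add (P : Fin r → Kˣ) (m n : Fin r → ℤ) :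
    charEval P (m + n) = charEval P m * charEval P n := by
  simp [charEval, zpow_add, Finset.prod_mul_distrib]

@[simp]
lemma charEval_mul (P P' : Fin r → Kˣ) (m : Fin r → ℤ) :
    charEval (P * P') m = charEval P m * charEval P' m := by
  simp [charEval, mul_zpow, Finset.prod_mul_distrib]

@[simp]
lemma charEval_inv (P : Fin r → Kˣ) (m : Fin r → ℤ) :
    charEval P⁻¹ m = (charEval P m)⁻¹ := by
  simp [charEval]

lemma charEval_pow (P : Fin r → Kˣ) (d : ℕ) (m : Fin r → ℤ) :
    charEval (P ^ d) m = charEval P m ^ d := by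
  simp only [charEval, ← Finset.prod_pow]
  refine Finset.prod_congr rfl fun i _ => ?_
  rw [Pi.pow_apply, ← zpow_natCast, ← zpow_mul, mul_comm, zpow_mul, zpow_natCast]

lemma charEval_apply_single (χ : (Fin r → ℤ) →+ Additive Kˣ) (m : Fin r → ℤ) :
    charEval (fun j => (χ (Pi.single j 1)).toMul) m = (χ m).toMul := by
  conv_rhs => rw [← Finset.univ_sum_single m]
  simp only [charEval, map_sum, toMul_sum]
  refine Finset.prod_congr rfl fun j _ => ?_
  rw [← toMul_zsmul, ← map_zsmul, ← Pi.single_smul, smul_eq_mul, mul_one]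

end CharEval

section Torsion

variable {K : Type*} [Field K]

lemma IsAlgClosed.exists_units_zpow_eq [IsAlgClosed K] (a : Kˣ) {n : ℤ} (hn : n ≠ 0) :
    ∃ z : Kˣ, z ^ n = a := by
  obtain ⟨w, hw⟩ := IsAlgClosed.exists_pow_nat_eq (a : K) (Int.natAbs_pos.mpr hn)
  have hw0 : w ≠ 0 := by
    rintro rfl
    exact a.ne_zero (by rw [← hw, zero_pow (Int.natAbs_ne_zero.mpr hn)])
  have hu : Units.mk0 w hw0 ^ n.natAbs = a := Units.ext (by simpa using hw)
  rcases Int.natAbs_eq n with h | h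
  · exact ⟨Units.mk0 w hw0, by rw [h, zpow_natCast, hu]⟩
  · exact ⟨(Units.mk0 w hw0)⁻¹, by rw [h, zpow_neg, inv_zpow, inv_inv, zpow_natCast, hu]⟩

noncomputable instance IsAlgClosed.divisibleByTorsionUnits [IsAlgClosed K] :
    DivisibleBy (Additive (CommGroup.torsion Kˣ)) ℤ :=
  divisibleByOfSMulRightSurj _ _ fun {n} hn a => by
    obtain ⟨z, hz⟩ := IsAlgClosed.exists_units_zpow_eq (a.toMul : Kˣ) hn
    have hz_tors : IsOfFinOrder z := by
      obtain ⟨k, hk, hak⟩ := isOfFinOrder_iff_zpow_eq_one.mp ((CommGroup.mem_torsion _).mp a.toMul.2)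
      refine isOfFinOrder_iff_zpow_eq_one.mpr ⟨n * k, mul_ne_zero hn hk, ?_⟩
      rw [zpow_mul, hz, hak]
    exact ⟨.ofMul ⟨z, (CommGroup.mem_torsion _).mpr hz_tors⟩, Subtype.ext hz⟩

variable {A : Type*} [AddCommGroup A] {r : ℕ}

lemma exists_mk_eq_of_isOfFinOrder_of_isAlgClosed [IsAlgClosed K] (β : (Fin r → ℤ) →+ A)
    {y : (Fin r → Kˣ) ⧸ torusG (K := K) β} (hy : IsOfFinOrder y) :
    ∃ P : Fin r → Kˣ, QuotientGroup.mk P = y ∧ ∀ j, IsOfFinOrder (P j) := by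
  obtain ⟨P₀, rfl⟩ := QuotientGroup.mk_surjective y
  obtain ⟨d, hd, hP₀d⟩ := isOfFinOrder_iff_pow_eq_one.mp hy
  have hP₀d_mem : P₀ ^ d ∈ torusG (K := K) β := by
    rwa [← QuotientGroup.eq_one_iff, QuotientGroup.mk_pow]
  have hχ_tors (m : β.ker) : charEval P₀ m ∈ CommGroup.torsion Kˣ :=
    (CommGroup.mem_torsion _).mpr <| isOfFinOrder_iff_pow_eq_one.mpr
      ⟨d, hd, by rw [← charEval_pow]; exact hP₀d_mem m m.2⟩
  let χ : β.ker →+ Additive (CommGroup.torsion Kˣ) :=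
    { toFun m := .ofMul ⟨charEval P₀ m, hχ_tors m⟩
      map_zero' := Subtype.ext (charEval_zero P₀)
      map_add' m n := Subtype.ext (charEval_add P₀ m n) }
  obtain ⟨χ', hχ'⟩ := (Module.Baer.of_divisible _).extension_property_addMonoidHom
    β.ker.subtype Subtype.val_injective χ
  let ψ : (Fin r → ℤ) →+ Additive Kˣ :=
    (MonoidHom.toAdditive (CommGroup.torsion Kˣ).subtype).comp χ'
  refine ⟨fun j => (ψ (Pi.single j 1)).toMul, ?_,
    fun j => (CommGroup.mem_torsion _).mp (χ' (Pi.single j 1)).toMul.2⟩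
  rw [QuotientGroup.eq]
  intro m hm
  rw [charEval_mul, charEval_inv, charEval_apply_single]
  have : (ψ m).toMul = charEval P₀ m := congrArg (fun f => ((f ⟨m, hm⟩).toMul : Kˣ)) hχ'
  rw [this, inv_mul_cancel]

end Torsion

lemma exists_forall_mem_zpowers_of_isOfFinOrder {R : Type*} [CommRing R] [IsDomain R]
    {ι : Type*} [Finite ι] (u : ι → Rˣ) (hu : ∀ i, IsOfFinOrder (u i)) :
    ∃ ζ : Rˣ, IsOfFinOrder ζ ∧ ∀ i, u i ∈ Subgroup.zpowers ζ := by
  have := Fintype.ofFinite ι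
  set N := ∏ i, orderOf (u i)
  have : NeZero N := ⟨Finset.prod_ne_zero_iff.mpr fun i _ => (hu i).orderOf_pos.ne'⟩
  have hu_mem (i : ι) : u i ∈ rootsOfUnity N R := (mem_rootsOfUnity _ _).mpr <|
    orderOf_dvd_iff_pow_eq_one.mp (Finset.dvd_prod_of_mem _ (Finset.mem_univ i))
  obtain ⟨ζ, hζ⟩ := IsCyclic.exists_generator (α := rootsOfUnity N R)
  refine ⟨ζ, isOfFinOrder_iff_pow_eq_one.mpr ⟨N, N.pos_of_neZero, (mem_rootsOfUnity _ _).mp ζ.2⟩,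
    fun i => ?_⟩
  obtain ⟨k, hk⟩ := Subgroup.mem_zpowers_iff.mp (hζ ⟨u i, hu_mem i⟩)
  exact Subgroup.mem_zpowers_iff.mpr ⟨k, congrArg Subtype.val hk⟩

section LaurentMonomial

variable {G T : Type*} [CommGroup G] [CommMonoid T] {ι κ : Type*} [Fintype ι]

def laurentMonomialHom (Q : Matrix ι κ ℤ) : (ι → G) →* (κ → G) where
  toFun t j := ∏ i, t i ^ Q i j
  map_one' := by ext; simp
  map_mul' t u := by ext; simp [mul_zpow, Finset.prod_mul_distrib]

lemma setOf_laurentMonomial_eq_coe_map (π : (κ → G) →* T) (Q : Matrix ι κ ℤ)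
    (H : Submonoid G) :
    {y | ∃ t : ι → G, (∀ i, t i ∈ H) ∧ y = π (fun j => ∏ i, t i ^ Q i j)} =
      ((Submonoid.pi Set.univ fun _ => H).map (π.comp (laurentMonomialHom Q)) : Set T) := by
  ext y
  simp [Submonoid.mem_pi, laurentMonomialHom, eq_comm]

lemma eq_setOf_laurentMonomial_of_forall_mem_zpowers (π : (κ → G) →* T)
    (M : Submonoid T) [Finite M] (ζ : G) (P : M → κ → G) (hP : ∀ y, π (P y) = y)
    (hPζ : ∀ y j, P y j ∈ Subgroup.zpowers ζ) :
    ∃ (s : ℕ) (Q : Matrix (Fin s) κ ℤ), (M : Set T) =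
      {y | ∃ t : Fin s → G, (∀ i, t i ∈ Submonoid.powers ζ) ∧
        y = π (fun j => ∏ i, t i ^ Q i j)} := by
  classical
  choose q hq using fun y j => Subgroup.mem_zpowers_iff.mp (hPζ y j)
  set e := (Finite.equivFin M).symm
  refine ⟨Nat.card M, fun i j => q (e i) j, Set.ext fun y => ⟨fun hy => ?_, ?_⟩⟩
  · refine ⟨Pi.mulSingle (e.symm ⟨y, hy⟩) ζ, fun i => ?_, ?_⟩
    · rcases eq_or_ne i (e.symm ⟨y, hy⟩) with rfl | h
      · simp [Submonoid.mem_powers]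
      · simp [h]
    · have : (fun j => ∏ i, Pi.mulSingle (e.symm ⟨y, hy⟩) ζ i ^ q (e i) j) = P ⟨y, hy⟩ := by
        funext j
        rw [Finset.prod_eq_single (e.symm ⟨y, hy⟩) (fun i _ h => by simp [h]) (by simp)]
        simp [hq]
      rw [this, hP]
  · rintro ⟨t, ht, rfl⟩
    choose a ha using fun i => (Submonoid.mem_powers_iff _ _).mp (ht i)
    have : (fun j => ∏ i, t i ^ q (e i) j) = ∏ i, P (e i) ^ a i := by
      funext j
      simp only [Finset.prod_apply, Pi.pow_apply, ← ha, ← hq, ← zpow_natCast, ← zpow_mul,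
        mul_comm]
    rw [this, map_prod]
    exact prod_mem fun i _ => by rw [map_pow, hP]; exact pow_mem (e i).2 _

end LaurentMonomial

lemma exists_mk_eq_of_isOfFinOrder {K : Type*} [Field K] {A : Type*} [AddCommGroup A] {r : ℕ}
    (hK : Finite K ∨ IsAlgClosed K) (β : (Fin r → ℤ) →+ A)
    {y : (Fin r → Kˣ) ⧸ torusG (K := K) β} (hy : IsOfFinOrder y) :
    ∃ P : Fin r → Kˣ, QuotientGroup.mk P = y ∧ ∀ j, IsOfFinOrder (P j) := by
  rcases hK with hK | hK
  · obtain ⟨P, rfl⟩ := QuotientGroup.mk_surjective y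
    exact ⟨P, rfl, fun j => isOfFinOrder_of_finite (P j)⟩
  · exact exists_mk_eq_of_isOfFinOrder_of_isAlgClosed β hy

theorem stmt_4_general {K : Type*} [Field K] {A : Type*} [AddCommGroup A] {r : ℕ}
    (hK : Finite K ∨ IsAlgClosed K)
    (β : (Fin r → ℤ) →+ A)
    (Y : Set ((Fin r → Kˣ) ⧸ torusG (K := K) β)) :
    ((∃ M : Submonoid ((Fin r → Kˣ) ⧸ torusG (K := K) β), Y = (M : Set _)) ∧ Y.Finite) ↔
      (∃ (s : ℕ) (Q : Matrix (Fin s) (Fin r) ℤ) (H : Submonoid Kˣ), (H : Set Kˣ).Finite ∧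
        Y = {y | ∃ t : Fin s → Kˣ, (∀ i, t i ∈ H) ∧
          y = QuotientGroup.mk (fun j => ∏ i, (t i) ^ (Q i j))}) := by
  constructor
  · rintro ⟨⟨M, rfl⟩, hM⟩
    have : Finite M := hM.to_subtype
    have hlift (y : M) :
        ∃ P : Fin r → Kˣ, QuotientGroup.mk' (torusG β) P = y ∧ ∀ j, IsOfFinOrder (P j) :=
      exists_mk_eq_of_isOfFinOrder hK β
        (finite_powers.mp (hM.subset (SetLike.coe_subset_coe.mpr (Submonoid.powers_le.mpr y.2))))
    choose P hPy hP using hlift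
    obtain ⟨ζ, hζ, hPζ⟩ := exists_forall_mem_zpowers_of_isOfFinOrder
      (fun p : M × Fin r => P p.1 p.2) fun p => hP p.1 p.2
    obtain ⟨s, Q, hMQ⟩ := eq_setOf_laurentMonomial_of_forall_mem_zpowers
      (T := (Fin r → Kˣ) ⧸ torusG (K := K) β) (QuotientGroup.mk' _) M ζ P hPy
      fun y j => hPζ (y, j)
    exact ⟨s, Q, Submonoid.powers ζ, hζ.finite_powers, hMQ⟩
  · rintro ⟨s, Q, H, hH, rfl⟩
    have hY := setOf_laurentMonomial_eq_coe_map
      (T := (Fin r → Kˣ) ⧸ torusG (K := K) β) (QuotientGroup.mk' _) Q H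
    simp only [QuotientGroup.mk'_apply] at hY
    refine ⟨⟨_, hY⟩, ?_⟩
    rw [hY, Submonoid.coe_map, Submonoid.coe_pi]
    exact (Set.Finite.pi fun _ => hH).image _

/-- over a finite or algebraically closed field, a subset `Y` of the
torus is a finite submonoid if and only if `Y = Y_{Q,H}` is parameterized by Laurent
monomials, for some integer matrix `Q` and finite submonoid `H` of `K*`. -/
theorem stmt_4 {K : Type*} [Field K] {A : Type*} [AddCommGroup A] {r : ℕ}
    (hK : Finite K ∨ IsAlgClosed K)
    (β : (Fin r → ℤ) →+ A) (hβ : Function.Surjective β)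
    (Y : Set ((Fin r → Kˣ) ⧸ torusG (K := K) β)) :
    ((∃ M : Submonoid ((Fin r → Kˣ) ⧸ torusG (K := K) β), Y = (M : Set _)) ∧ Y.Finite) ↔
      (∃ (s : ℕ) (Q : Matrix (Fin s) (Fin r) ℤ) (H : Submonoid Kˣ), (H : Set Kˣ).Finite ∧
        Y = {y | ∃ t : Fin s → Kˣ, (∀ i, t i ∈ H) ∧
          y = QuotientGroup.mk (fun j => ∏ i, (t i) ^ (Q i j))}) :=
  stmt_4_general hK β Y
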